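/- Let μ be a compactly supported Borel probability measure on ℝ^ν and P ⊂ ℝ^ν a set of orthogonal frequencies for L²(μ). Then the function Q(t) = Σ_{λ∈P} |μ̂(t−λ)|² on ℝ^ν extends to an entire analytic function on ℂ^ν satisfying |Q(t+is)| ≤ e^{4πm‖s‖₂} for all t,s ∈ ℝ^ν, where m bounds the norm of points in supp(μ). -/

import Mathlib

set_option maxHeartbeats 400000


open MeasureTheory RealInnerProductSpace

/-- Fourier transform `μ̂(t) = ∫ e^{2πi t·x} dμ(x)` of a measure on `ℝ^ν`. -/
noncomputable def muHat {ν : ℕ} (μ : Measure (EuclideanSpace ℝ (Fin ν)))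
    (t : EuclideanSpace ℝ (Fin ν)) : ℂ :=
  ∫ x, Complex.exp ((((2 : ℝ) * Real.pi * ⟪t, x⟫ : ℝ) : ℂ) * Complex.I) ∂μ

namespace QAux

open Complex Set

variable {ν : ℕ}

/-- The closed ball of radius `m`. -/
abbrev Kb (ν : ℕ) (m : ℝ) : Set (EuclideanSpace ℝ (Fin ν)) :=
  Metric.closedBall (0 : EuclideanSpace ℝ (Fin ν)) m

instance (m : ℝ) : CompactSpace (Kb ν m) :=
  isCompact_iff_compactSpace.mp (isCompact_closedBall _ _)

lemma embK (m : ℝ) :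
    MeasurableEmbedding ((↑) : Kb ν m → EuclideanSpace ℝ (Fin ν)) :=
  MeasurableEmbedding.subtype_coe measurableSet_closedBall

/-- The measure transported to the ball. -/
noncomputable def muK (μ : Measure (EuclideanSpace ℝ (Fin ν))) (m : ℝ) :
    Measure (Kb ν m) :=
  Measure.comap Subtype.val μ

instance (μ : Measure (EuclideanSpace ℝ (Fin ν))) [IsProbabilityMeasure μ] (m : ℝ) :
    IsFiniteMeasure (muK μ m) := by
  constructor
  rw [muK, (embK m).comap_apply]
  exact measure_lt_top μ _

variable (μ : Measure (EuclideanSpace ℝ (Fin ν))) [IsProbabilityMeasure μ] (m : ℝ)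

lemma mapMuK (hm : μ (Kb ν m)ᶜ = 0) :
    (muK μ m).map Subtype.val = μ := by
  rw [muK, (embK m).map_comap, Subtype.range_coe]
  exact Measure.restrict_eq_self_of_ae_mem (Filter.mem_of_superset (mem_ae_iff.mpr hm) fun x hx => hx)

lemma integral_transfer (hm : μ (Kb ν m)ᶜ = 0) (h : EuclideanSpace ℝ (Fin ν) → ℂ) :
    ∫ x : Kb ν m, h ↑x ∂(muK μ m) = ∫ x, h x ∂μ := by
  conv_rhs => rw [← mapMuK μ m hm]
  rw [(embK m).integral_map]

lemma probMuK (hm : μ (Kb ν m)ᶜ = 0) : IsProbabilityMeasure (muK μ m) := by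
  constructor
  rw [muK, (embK m).comap_apply, Set.image_univ, Subtype.range_coe]
  rw [← measure_univ (μ := μ), ← measure_add_measure_compl
    (measurableSet_closedBall (x := (0 : EuclideanSpace ℝ (Fin ν))) (ε := m)), hm, add_zero]

/-- The linear map `z ↦ (x ↦ 2πi ∑ z j * x j)` into `C(K, ℂ)`. -/
noncomputable def Lam (ν : ℕ) (m : ℝ) : (Fin ν → ℂ) →L[ℂ] C(Kb ν m, ℂ) :=
  ∑ j : Fin ν, (ContinuousLinearMap.proj j).smulRight
    ((2 * Real.pi * Complex.I : ℂ) •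
      (⟨fun x => ((x : EuclideanSpace ℝ (Fin ν)) j : ℂ), by
        exact Complex.continuous_ofReal.comp
          ((EuclideanSpace.proj j).continuous.comp continuous_subtype_val)⟩ : C(Kb ν m, ℂ)))

lemma Lam_apply (z : Fin ν → ℂ) (x : Kb ν m) :
    (Lam ν m z) x = 2 * Real.pi * Complex.I *
      ∑ j, z j * ((x : EuclideanSpace ℝ (Fin ν)) j : ℂ) := by
  simp only [Lam, ContinuousLinearMap.sum_apply, ContinuousLinearMap.smulRight_apply,
    ContinuousLinearMap.proj_apply, ContinuousMap.sum_apply, ContinuousMap.smul_apply,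
    ContinuousMap.coe_mk, smul_eq_mul, Finset.mul_sum]
  refine Finset.sum_congr rfl fun j _ => by ring

/-- The `L²` element `x ↦ exp(2πi ∑ z j * x j)`. -/
noncomputable def gH (z : Fin ν → ℂ) : Lp ℂ 2 (muK μ m) :=
  ContinuousMap.toLp (E := ℂ) (p := 2) (μ := muK μ m) (𝕜 := ℂ) (NormedSpace.exp (Lam ν m z))

lemma gH_analytic (z : Fin ν → ℂ) : AnalyticAt ℂ (gH μ m) z := by
  refine ((ContinuousMap.toLp (E := ℂ) (p := 2) (μ := muK μ m) (𝕜 := ℂ)).analyticAt _).comp ?_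
  refine AnalyticAt.comp ?_ ((Lam ν m).analyticAt z)
  exact NormedSpace.analyticAt_exp_of_mem_ball (𝕂 := ℂ) _
    (by rw [NormedSpace.expSeries_radius_eq_top]; exact edist_lt_top _ _)

lemma gH_coe (z : Fin ν → ℂ) :
    (gH μ m z : Kb ν m → ℂ) =ᵐ[muK μ m]
      fun x => Complex.exp (2 * Real.pi * Complex.I *
        ∑ j, z j * ((x : EuclideanSpace ℝ (Fin ν)) j : ℂ)) := by
  refine (ContinuousMap.coeFn_toLp _ _).trans (Filter.Eventually.of_forall fun x => ?_)
  have h1 : (NormedSpace.exp (Lam ν m z)) x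
      = NormedSpace.exp ((Lam ν m z) x) := by
    exact NormedSpace.map_exp (ContinuousMap.evalAlgHom ℂ ℂ x)
      (continuous_eval_const x) _
  calc (NormedSpace.exp (Lam ν m z)) x
      = NormedSpace.exp ((Lam ν m z) x) := h1
    _ = Complex.exp ((Lam ν m z) x) := by rw [← Complex.exp_eq_exp_ℂ]
    _ = _ := by rw [Lam_apply]

/-- Real frequencies, as complex vectors. -/
def ct (t : EuclideanSpace ℝ (Fin ν)) : Fin ν → ℂ := fun j => ((t j : ℝ) : ℂ)

lemma inner_gH_real (hm : μ (Kb ν m)ᶜ = 0) (t u : EuclideanSpace ℝ (Fin ν)) :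
    (@inner ℂ (Lp ℂ 2 (muK μ m)) _ (gH μ m (ct t)) (gH μ m (ct u))) = muHat μ (u - t) := by
  rw [MeasureTheory.L2.inner_def]
  have hstep : ∫ x, (@inner ℂ ℂ _ ((gH μ m (ct t) : Kb ν m → ℂ) x)
        ((gH μ m (ct u) : Kb ν m → ℂ) x)) ∂(muK μ m)
      = ∫ x : Kb ν m, (fun y : EuclideanSpace ℝ (Fin ν) =>
          Complex.exp ((((2 : ℝ) * Real.pi * ⟪u - t, y⟫ : ℝ) : ℂ) * Complex.I)) ↑x
          ∂(muK μ m) := by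
    refine integral_congr_ae ?_
    filter_upwards [gH_coe μ m (ct t), gH_coe μ m (ct u)] with x h1 h2
    rw [RCLike.inner_apply, h1, h2, ← Complex.exp_conj, ← Complex.exp_add]
    congr 1
    simp only [ct, map_mul, map_sum, map_ofNat, Complex.conj_ofReal, Complex.conj_I,
      PiLp.inner_apply, RCLike.inner_apply, conj_trivial, PiLp.sub_apply]
    push_cast
    simp only [mul_comm (((x : EuclideanSpace ℝ (Fin ν)) _ : ℝ) : ℂ)]
    simp only [sub_mul, Finset.sum_sub_distrib]
    ring
  refine hstep.trans ((integral_transfer μ m hm (fun y : EuclideanSpace ℝ (Fin ν) =>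
    Complex.exp ((((2 : ℝ) * Real.pi * ⟪u - t, y⟫ : ℝ) : ℂ) * Complex.I))).trans rfl)

lemma norm_gH_le (hm : μ (Kb ν m)ᶜ = 0) (t s : EuclideanSpace ℝ (Fin ν)) :
    ‖gH μ m (fun j => (t j : ℂ) + (s j : ℂ) * Complex.I)‖
      ≤ Real.exp (2 * Real.pi * m * ‖s‖) := by
  haveI := probMuK μ m hm
  refine (Lp.norm_le_of_ae_bound (C := Real.exp (2 * Real.pi * m * ‖s‖))
    (Real.exp_nonneg _) ?_).trans ?_
  · filter_upwards [gH_coe μ m (fun j => (t j : ℂ) + (s j : ℂ) * Complex.I)] with x hx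
    rw [hx, Complex.norm_exp]
    apply Real.exp_le_exp.mpr
    have hsum : (∑ j, ((t j : ℂ) + (s j : ℂ) * Complex.I) * (((x : EuclideanSpace ℝ (Fin ν)) j : ℝ) : ℂ))
        = ((∑ j, t j * (x : EuclideanSpace ℝ (Fin ν)) j : ℝ) : ℂ)
          + ((∑ j, s j * (x : EuclideanSpace ℝ (Fin ν)) j : ℝ) : ℂ) * Complex.I := by
      push_cast
      rw [Finset.sum_mul, ← Finset.sum_add_distrib]
      exact Finset.sum_congr rfl fun j _ => by ring
    rw [hsum]
    have hre : (2 * (Real.pi : ℂ) * Complex.I *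
        (((∑ j, t j * (x : EuclideanSpace ℝ (Fin ν)) j : ℝ) : ℂ)
          + ((∑ j, s j * (x : EuclideanSpace ℝ (Fin ν)) j : ℝ) : ℂ) * Complex.I)).re
        = -(2 * Real.pi * ∑ j, s j * (x : EuclideanSpace ℝ (Fin ν)) j) := by
      simp [Complex.mul_re, Complex.mul_im]
      try ring
    rw [hre]
    have habs : |∑ j, s j * (x : EuclideanSpace ℝ (Fin ν)) j| ≤ ‖s‖ * m := by
      have h1 : |⟪s, (x : EuclideanSpace ℝ (Fin ν))⟫| ≤ ‖s‖ * ‖(x : EuclideanSpace ℝ (Fin ν))‖ :=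
        abs_real_inner_le_norm _ _
      have h2 : ⟪s, (x : EuclideanSpace ℝ (Fin ν))⟫ = ∑ j, s j * (x : EuclideanSpace ℝ (Fin ν)) j := by
        simp [PiLp.inner_apply, RCLike.inner_apply]
        exact Finset.sum_congr rfl fun _ _ => mul_comm _ _
      have h3 : ‖(x : EuclideanSpace ℝ (Fin ν))‖ ≤ m := by
        have := x.2
        rwa [Metric.mem_closedBall, dist_zero_right] at this
      rw [h2] at h1
      refine h1.trans ?_
      exact mul_le_mul_of_nonneg_left h3 (norm_nonneg _)
    have hpi : (0 : ℝ) < Real.pi := Real.pi_pos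
    nlinarith [abs_le.mp habs]
  · have h1 : measureUnivNNReal (muK μ m) = 1 := by
      simp [measureUnivNNReal, measure_univ]
    rw [h1]
    simp

/-- Complex conjugation on `L²`. -/
noncomputable def conjL (f : Lp ℂ 2 (muK μ m)) : Lp ℂ 2 (muK μ m) :=
  (Complex.conjLIE.lipschitz).compLp (map_zero _) f

lemma conjL_coe (f : Lp ℂ 2 (muK μ m)) :
    (conjL μ m f : Kb ν m → ℂ) =ᵐ[muK μ m] fun x => (starRingEnd ℂ) (f x) :=
  LipschitzWith.coeFn_compLp _ _ _

lemma norm_conjL (f : Lp ℂ 2 (muK μ m)) : ‖conjL μ m f‖ ≤ ‖f‖ := by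
  have := LipschitzWith.norm_compLp_le (Complex.conjLIE.lipschitz) (map_zero _) f
  rw [NNReal.coe_one, one_mul] at this
  exact this

lemma conjL_add (f g : Lp ℂ 2 (muK μ m)) :
    conjL μ m (f + g) = conjL μ m f + conjL μ m g := by
  apply Lp.ext
  filter_upwards [conjL_coe μ m (f + g), conjL_coe μ m f, conjL_coe μ m g,
    Lp.coeFn_add f g, Lp.coeFn_add (conjL μ m f) (conjL μ m g)] with x h1 h2 h3 h4 h5
  rw [h1, h5, Pi.add_apply, h2, h3, h4, Pi.add_apply, map_add]

lemma conjL_smul (c : ℂ) (f : Lp ℂ 2 (muK μ m)) :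
    conjL μ m (c • f) = (starRingEnd ℂ c) • conjL μ m f := by
  apply Lp.ext
  filter_upwards [conjL_coe μ m (c • f), conjL_coe μ m f,
    Lp.coeFn_smul c f, Lp.coeFn_smul ((starRingEnd ℂ) c) (conjL μ m f)] with x h1 h2 h3 h4
  rw [h1, h4, Pi.smul_apply, h2, h3, Pi.smul_apply, smul_eq_mul, smul_eq_mul, map_mul]

lemma conjL_gH_real (t : EuclideanSpace ℝ (Fin ν)) :
    conjL μ m (gH μ m (-(ct t))) = gH μ m (ct t) := by
  apply Lp.ext
  filter_upwards [conjL_coe μ m (gH μ m (-(ct t))), gH_coe μ m (-(ct t)),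
    gH_coe μ m (ct t)] with x h1 h2 h3
  rw [h1, h2, h3, ← Complex.exp_conj]
  congr 1
  simp only [ct, map_mul, map_sum, map_ofNat, Complex.conj_ofReal, Complex.conj_I,
    conj_trivial, Pi.neg_apply, map_neg, neg_mul, Finset.sum_neg_distrib, mul_neg,
    neg_neg]

/-- The bilinear pairing `(u, v) ↦ ∫ u v`. -/
noncomputable def Jb : Lp ℂ 2 (muK μ m) →L[ℂ] Lp ℂ 2 (muK μ m) →L[ℂ] ℂ :=
  LinearMap.mkContinuous
    { toFun := fun u => innerSL ℂ (conjL μ m u)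
      map_add' := fun u u' => by beta_reduce; rw [conjL_add]; exact map_add (innerSL ℂ) _ _
      map_smul' := fun c u => by
        rw [conjL_smul]
        ext v
        simp [inner_smul_left] }
    1 (fun u => by
        rw [one_mul]
        calc ‖innerSL ℂ (conjL μ m u)‖ = ‖conjL μ m u‖ := innerSL_apply_norm (𝕜 := ℂ) _
        _ ≤ ‖u‖ := norm_conjL μ m u)

lemma Jb_apply (u v : Lp ℂ 2 (muK μ m)) :
    Jb μ m u v = (@inner ℂ (Lp ℂ 2 (muK μ m)) _ (conjL μ m u) v) := rfl

end QAux

open QAux Complex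

theorem Q_extends_entire_with_exponential_bound {ν : ℕ}
    (μ : Measure (EuclideanSpace ℝ (Fin ν))) [IsProbabilityMeasure μ]
    (m : ℝ) (hm : μ (Metric.closedBall (0 : EuclideanSpace ℝ (Fin ν)) m)ᶜ = 0)
    (P : Set (EuclideanSpace ℝ (Fin ν)))
    (horth : ∀ lam ∈ P, ∀ lam' ∈ P, lam ≠ lam' → muHat μ (lam' - lam) = 0) :
    ∃ F : (Fin ν → ℂ) → ℂ,
      (∀ z : Fin ν → ℂ, AnalyticAt ℂ F z) ∧
      (∀ t : EuclideanSpace ℝ (Fin ν),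
        F (fun j => (t j : ℂ)) = ∑' lam : P, ‖muHat μ (t - (lam : _))‖ ^ 2) ∧
      (∀ t s : EuclideanSpace ℝ (Fin ν),
        ‖F (fun j => (t j : ℂ) + (s j : ℂ) * Complex.I)‖
          ≤ Real.exp (4 * Real.pi * m * ‖s‖)) := by
  classical
  -- the orthonormal family of exponentials
  set e : P → Lp ℂ 2 (muK μ m) := fun lam => gH μ m (ct (lam : _)) with he
  have hON : Orthonormal ℂ e := by
    rw [orthonormal_iff_ite]
    intro l l'
    rw [he]
    simp only
    rw [inner_gH_real μ m hm]
    by_cases h : l = l'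
    · subst h
      simp only [if_pos rfl, sub_self]
      rw [muHat]
      simp only [inner_zero_left, mul_zero, Complex.ofReal_zero, zero_mul, Complex.exp_zero]
      simp [measure_univ]
    · rw [if_neg h]
      exact horth _ l.2 _ l'.2 (fun hc => h (Subtype.ext hc))
  -- the closed span
  set V : Submodule ℂ (Lp ℂ 2 (muK μ m)) :=
    (Submodule.span ℂ (Set.range e)).topologicalClosure with hV
  haveI : CompleteSpace V := (Submodule.isClosed_topologicalClosure _).completeSpace_coe
  have hmemV : ∀ l : P, e l ∈ V :=
    fun l => Submodule.le_topologicalClosure _ (Submodule.subset_span (Set.mem_range_self l))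
  set e' : P → V := fun l => ⟨e l, hmemV l⟩ with he'
  have hON' : Orthonormal ℂ e' := by
    rw [orthonormal_iff_ite] at hON ⊢
    intro l l'
    rw [he']
    simpa [Submodule.coe_inner] using hON l l'
  have hdense : ⊤ ≤ (Submodule.span ℂ (Set.range e')).topologicalClosure := by
    intro x _
    have hx : (x : Lp ℂ 2 (muK μ m)) ∈ closure ((Submodule.span ℂ (Set.range e) : Set _)) :=
      x.2
    have hgoal : x ∈ closure ((Submodule.span ℂ (Set.range e') : Set V)) := by
      rw [closure_subtype]
      have himg : (Subtype.val '' ((Submodule.span ℂ (Set.range e') : Set V)))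
          = ((Submodule.span ℂ (Set.range e) : Set (Lp ℂ 2 (muK μ m)))) := by
        have h3 : (Subtype.val '' ((Submodule.span ℂ (Set.range e') : Set V)))
            = ((Submodule.map V.subtype (Submodule.span ℂ (Set.range e'))) : Set _) := rfl
        rw [h3, Submodule.map_span]
        congr 1
        rw [← Set.range_comp]
        rfl
      rw [himg]
      exact hx
    exact hgoal
  set b : HilbertBasis P ℂ V := HilbertBasis.mk hON' hdense with hb
  set PV : Lp ℂ 2 (muK μ m) →L[ℂ] Lp ℂ 2 (muK μ m) :=
    V.subtypeL.comp (V.orthogonalProjection) with hPV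
  refine ⟨(fun p : (Lp ℂ 2 (muK μ m)) × (Lp ℂ 2 (muK μ m)) => Jb μ m p.1 p.2) ∘
    (fun w : Fin ν → ℂ => (gH μ m (-w), PV (gH μ m w))), ?_, ?_, ?_⟩
  · -- analyticity
    intro z
    have h1 : AnalyticAt ℂ (fun z : Fin ν → ℂ => gH μ m (-z)) z := by
      have : AnalyticAt ℂ (fun z : Fin ν → ℂ => -z) z := analyticAt_id.neg
      exact (gH_analytic μ m (-z)).comp this
    have h2 : AnalyticAt ℂ (fun z : Fin ν → ℂ => PV (gH μ m z)) z :=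
      (PV.analyticAt _).comp (gH_analytic μ m z)
    have hpair : AnalyticAt ℂ (fun w : Fin ν → ℂ => (gH μ m (-w), PV (gH μ m w))) z :=
      h1.prod h2
    have hb2 : AnalyticAt ℂ
        (fun p : (Lp ℂ 2 (muK μ m)) × (Lp ℂ 2 (muK μ m)) => Jb μ m p.1 p.2)
        (gH μ m (-z), PV (gH μ m z)) :=
      (Jb μ m).analyticAt_bilinear _
    exact hb2.comp_of_eq hpair rfl
    
  · -- value at real points
    intro t
    have hshow : (((fun p : (Lp ℂ 2 (muK μ m)) × (Lp ℂ 2 (muK μ m)) => Jb μ m p.1 p.2) ∘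
          (fun w : Fin ν → ℂ => (gH μ m (-w), PV (gH μ m w)))) (fun j => ((t j : ℝ) : ℂ)))
        = @inner ℂ (Lp ℂ 2 (muK μ m)) _ (conjL μ m (gH μ m (-(ct t))))
            (PV (gH μ m (ct t))) := rfl
    rw [hshow, conjL_gH_real μ m t]
    have hPVgh : PV (gH μ m (ct t))
        = ((V.orthogonalProjection (gH μ m (ct t)) : V) : Lp ℂ 2 (muK μ m)) := rfl
    rw [hPVgh, ← Submodule.inner_orthogonalProjection_eq_of_mem_right]
    have hsum := b.hasSum_inner_mul_inner (V.orthogonalProjection (gH μ m (ct t)))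
      (V.orthogonalProjection (gH μ m (ct t)))
    have hterm : (fun l : P => (@inner ℂ V _ (V.orthogonalProjection (gH μ m (ct t))) (b l))
          * (@inner ℂ V _ (b l) (V.orthogonalProjection (gH μ m (ct t)))))
        = fun l : P => ((‖muHat μ (t - (l : _))‖ ^ 2 : ℝ) : ℂ) := by
      funext l
      have hb2 : b l = e' l := by rw [hb, HilbertBasis.coe_mk]
      have h1 : (@inner ℂ V _ (b l) (V.orthogonalProjection (gH μ m (ct t))))
          = @inner ℂ (Lp ℂ 2 (muK μ m)) _ (e l) (gH μ m (ct t)) := by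
        rw [hb2]
        exact Submodule.inner_orthogonalProjection_eq_of_mem_left (𝕜 := ℂ) (E := Lp ℂ 2 (muK μ m)) (K := V) (e' l) (gH μ m (ct t))
      have h3 : (@inner ℂ V _ (V.orthogonalProjection (gH μ m (ct t))) (b l))
          = (starRingEnd ℂ) (@inner ℂ V _ (b l) (V.orthogonalProjection (gH μ m (ct t)))) :=
        (inner_conj_symm (𝕜 := ℂ) (V.orthogonalProjection (gH μ m (ct t))) (b l)).symm
      rw [h3, h1, he]
      simp only
      rw [inner_gH_real μ m hm, RCLike.conj_mul]
      norm_cast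
    rw [hterm] at hsum
    have hself : (@inner ℂ V _ (V.orthogonalProjection (gH μ m (ct t)))
          (V.orthogonalProjection (gH μ m (ct t))))
        = ((‖V.orthogonalProjection (gH μ m (ct t))‖ ^ 2 : ℝ) : ℂ) := by
      erw [inner_self_eq_norm_sq_to_K (𝕜 := ℂ) (V.orthogonalProjection (gH μ m (ct t)))]
      norm_cast
    rw [hself] at hsum ⊢
    have hreal := (Complex.hasSum_ofReal).mp hsum
    rw [hreal.tsum_eq]
  · -- bound
    intro t s
    show ‖Jb μ m (gH μ m (-(fun j => (t j : ℂ) + (s j : ℂ) * Complex.I)))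
        (PV (gH μ m (fun j => (t j : ℂ) + (s j : ℂ) * Complex.I)))‖ ≤ _
    rw [Jb_apply]
    refine (norm_inner_le_norm (𝕜 := ℂ) _ _).trans ?_
    have h1 : ‖conjL μ m (gH μ m (-(fun j => (t j : ℂ) + (s j : ℂ) * Complex.I)))‖
        ≤ Real.exp (2 * Real.pi * m * ‖s‖) := by
      refine (norm_conjL μ m _).trans ?_
      have hz : (-(fun j => (t j : ℂ) + (s j : ℂ) * Complex.I) : Fin ν → ℂ)
          = fun j => (((-t : EuclideanSpace ℝ (Fin ν)) j : ℝ) : ℂ)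
            + (((-s : EuclideanSpace ℝ (Fin ν)) j : ℝ) : ℂ) * Complex.I := by
        funext j
        simp only [Pi.neg_apply, PiLp.neg_apply]
        push_cast
        ring
      rw [hz]
      have := norm_gH_le μ m hm (-t) (-s)
      rwa [norm_neg] at this
    have h2 : ‖PV (gH μ m (fun j => (t j : ℂ) + (s j : ℂ) * Complex.I))‖
        ≤ Real.exp (2 * Real.pi * m * ‖s‖) := by
      have hle : ‖PV (gH μ m (fun j => (t j : ℂ) + (s j : ℂ) * Complex.I))‖
          ≤ ‖gH μ m (fun j => (t j : ℂ) + (s j : ℂ) * Complex.I)‖ := by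
        have hnorm : ‖PV (gH μ m (fun j => (t j : ℂ) + (s j : ℂ) * Complex.I))‖
            = ‖V.orthogonalProjection (gH μ m (fun j => (t j : ℂ) + (s j : ℂ) * Complex.I))‖ :=
          rfl
        rw [hnorm]
        calc ‖V.orthogonalProjection (gH μ m (fun j => (t j : ℂ) + (s j : ℂ) * Complex.I))‖
            ≤ ‖V.orthogonalProjection‖
              * ‖gH μ m (fun j => (t j : ℂ) + (s j : ℂ) * Complex.I)‖ :=
              ContinuousLinearMap.le_opNorm _ _
          _ ≤ 1 * ‖gH μ m (fun j => (t j : ℂ) + (s j : ℂ) * Complex.I)‖ :=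
              mul_le_mul_of_nonneg_right (V.orthogonalProjection_norm_le) (norm_nonneg _)
          _ = _ := one_mul _
      exact hle.trans (norm_gH_le μ m hm t s)
    refine (mul_le_mul h1 h2 (norm_nonneg _) (Real.exp_nonneg _)).trans ?_
    rw [← Real.exp_add]
    apply le_of_eq
    congr 1
    ring
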